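/- For every complex z with Re z > 1, the integrals g₁(z) = ∫_{−∞}^{0} Φ(e^{2λ})·e^{λ(z−1/2)} dλ and g₂(z) = 2·∫_{0}^{∞} φ(e^{2λ})·e^{λz} dλ converge absolutely, and ∑_p (log p)·p^{−z} = (π^{z/2}/Γ(z/2))·( 1/(z−1) + g₁(z) + g₂(z) ), the sum ranging over all primes p. -/

import Mathlib

open Complex Filter Topology MeasureTheory Set

noncomputable def primePhi (x : ℝ) : ℝ :=
  ∑' p : Nat.Primes, Real.log (p : ℕ) * Real.exp (-((p : ℕ) : ℝ) ^ 2 * Real.pi * x)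

noncomputable def bigPhi (x : ℝ) : ℝ :=
  (2 * Real.sqrt x * primePhi x - 1) / x ^ ((1 : ℝ) / 4)

noncomputable def gam (z : ℂ) : ℂ := Complex.Gamma (z / 2) / (Real.pi : ℂ) ^ (z / 2)

def NontrivialZero (ρ : ℂ) : Prop := riemannZeta ρ = 0 ∧ 0 < ρ.re ∧ ρ.re < 1

noncomputable def Zfun (l : ℝ) : ℂ :=
  ∑' ρ : {ρ : ℂ // NontrivialZero ρ}, gam ρ * Complex.exp (-(l : ℂ) * ((ρ : ℂ) - 1 / 2))

/-!
`primePhi` is the theta series `∑ log p · e^{-π p² t}`, so termwise Gamma integrals give its Mellin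
transform at `z / 2` as `Γℝ(z) · ∑ log p · p^{-z}`; the Mellin integral converges absolutely by
monotone convergence, all terms being nonnegative. The substitution `t = e^{2λ}` turns it into
`2 ∫_ℝ φ(e^{2λ}) e^{λz} dλ`. For `λ < 0` one has
`2 φ(e^{2λ}) e^{λz} = Φ(e^{2λ}) e^{λ(z-1/2)} + e^{λ(z-1)}`, and the last term integrates to
`1 / (z - 1)` over `(-∞, 0)`.
-/

theorem MeasureTheory.integrable_tsum_of_nonneg {ι α : Type*} [Countable ι] [MeasurableSpace α]
    {μ : Measure α} {f : ι → α → ℝ} (hf : ∀ i, Integrable (f i) μ) (hf0 : ∀ i, 0 ≤ᵐ[μ] f i)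
    (hsum : Summable fun i ↦ ∫ a, f i a ∂μ) : Integrable (fun a ↦ ∑' i, f i a) μ := by
  -- Off the summability set both tsums below are junk (`0` and `⊤.toReal = 0`), so they agree.
  have hae : (fun a ↦ ∑' i, f i a) =ᵐ[μ] fun a ↦ (∑' i, ENNReal.ofReal (f i a)).toReal := by
    filter_upwards [ae_all_iff.mpr hf0] with a ha
    rw [ENNReal.tsum_toReal_eq fun _ ↦ ENNReal.ofReal_ne_top]
    exact tsum_congr fun i ↦ (ENNReal.toReal_ofReal (ha i)).symm
  have hmeas : ∀ i, AEMeasurable (fun a ↦ ENNReal.ofReal (f i a)) μ :=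
    fun i ↦ (hf i).aemeasurable.ennreal_ofReal
  refine (integrable_toReal_of_lintegral_ne_top (AEMeasurable.tsum hmeas) ?_).congr hae.symm
  rw [lintegral_tsum hmeas]
  simp_rw [← ofReal_integral_eq_lintegral_ofReal (hf _) (hf0 _)]
  rw [← ENNReal.ofReal_tsum_of_nonneg (fun i ↦ integral_nonneg_of_ae (hf0 i)) hsum]
  exact ENNReal.ofReal_ne_top

theorem Complex.ofReal_exp_cpow (u : ℝ) (w : ℂ) : ((Real.exp u : ℝ) : ℂ) ^ w = cexp (u * w) := by
  rw [cpow_def_of_ne_zero (ofReal_ne_zero.mpr (Real.exp_pos u).ne'),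
    ← ofReal_log (Real.exp_pos u).le, Real.log_exp]

section MellinExp

variable {E : Type*} [NormedAddCommGroup E] [NormedSpace ℂ E]

theorem abs_exp_smul_cpow_sub_one_smul (f : ℝ → E) (s : ℂ) (u : ℝ) :
    |Real.exp u| • (((Real.exp u : ℝ) : ℂ) ^ (s - 1) • f (Real.exp u))
      = cexp (u * s) • f (Real.exp u) := by
  rw [abs_of_pos (Real.exp_pos u), ofReal_exp_cpow, ← smul_assoc, real_smul, ofReal_exp,
    ← Complex.exp_add]
  ring_nf

theorem mellinConvergent_iff_integrable_comp_exp (f : ℝ → E) (s : ℂ) :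
    MellinConvergent f s ↔ Integrable fun u : ℝ ↦ cexp (u * s) • f (Real.exp u) := by
  rw [MellinConvergent, ← Real.range_exp, ← image_univ,
    integrableOn_image_iff_integrableOn_abs_deriv_smul MeasurableSet.univ
      (fun u _ ↦ (Real.hasDerivAt_exp u).hasDerivWithinAt) Real.exp_injective.injOn,
    integrableOn_univ]
  simp_rw [abs_exp_smul_cpow_sub_one_smul]

theorem mellin_eq_integral_comp_exp (f : ℝ → E) (s : ℂ) :
    mellin f s = ∫ u : ℝ, cexp (u * s) • f (Real.exp u) := by
  rw [mellin, ← Real.range_exp, ← image_univ,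
    integral_image_eq_integral_abs_deriv_smul MeasurableSet.univ
      (fun u _ ↦ (Real.hasDerivAt_exp u).hasDerivWithinAt) Real.exp_injective.injOn,
    setIntegral_univ]
  simp_rw [abs_exp_smul_cpow_sub_one_smul]

end MellinExp

theorem cexp_two_mul_mul_div_two_smul (f : ℝ → ℂ) (s : ℂ) (l : ℝ) :
    cexp (((2 * l : ℝ) : ℂ) * (s / 2)) • f (Real.exp (2 * l))
      = f (Real.exp (2 * l)) * cexp (l * s) := by
  rw [smul_eq_mul, mul_comm]
  congr 2
  push_cast
  ring

theorem mellinConvergent_div_two_iff (f : ℝ → ℂ) (s : ℂ) :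
    MellinConvergent f (s / 2) ↔ Integrable fun l : ℝ ↦ f (Real.exp (2 * l)) * cexp (l * s) := by
  rw [mellinConvergent_iff_integrable_comp_exp,
    ← integrable_comp_mul_left_iff _ (two_ne_zero : (2 : ℝ) ≠ 0)]
  simp_rw [cexp_two_mul_mul_div_two_smul]

theorem mellin_div_two_eq (f : ℝ → ℂ) (s : ℂ) :
    mellin f (s / 2) = 2 * ∫ l : ℝ, f (Real.exp (2 * l)) * cexp (l * s) := by
  have h := Measure.integral_comp_mul_left (fun u : ℝ ↦ cexp (u * (s / 2)) • f (Real.exp u)) 2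
  simp only [cexp_two_mul_mul_div_two_smul] at h
  rw [mellin_eq_integral_comp_exp, h, abs_of_pos (by norm_num), Complex.real_smul]
  push_cast
  ring

theorem integrableOn_rpow_mul_exp_neg_pi_mul_sq_mul_Ioi {a r : ℝ} (ha : 0 < a) (hr : 0 < r) :
    IntegrableOn (fun t ↦ t ^ (a - 1) * Real.exp (-(Real.pi * r ^ 2 * t))) (Ioi 0) := by
  refine (integrableOn_rpow_mul_exp_neg_mul_rpow (s := a - 1) (by linarith) one_pos
    (by positivity : 0 < Real.pi * r ^ 2)).congr_fun (fun t _ ↦ ?_) measurableSet_Ioi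
  simp only [Real.rpow_one, neg_mul]

theorem integral_rpow_mul_exp_neg_pi_mul_sq_mul_Ioi {a r : ℝ} (ha : 0 < a) (hr : 0 < r) :
    ∫ t in Ioi 0, t ^ (a - 1) * Real.exp (-(Real.pi * r ^ 2 * t))
      = Real.Gamma a * Real.pi ^ (-a) / r ^ (2 * a) := by
  rw [Real.integral_rpow_mul_exp_neg_mul_Ioi ha (by positivity), one_div,
    Real.inv_rpow (by positivity),
    Real.mul_rpow Real.pi_pos.le (by positivity), ← Real.rpow_natCast, ← Real.rpow_mul hr.le,
    Real.rpow_neg Real.pi_pos.le]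
  push_cast
  ring

theorem Real.summable_log_div_rpow {σ : ℝ} (hσ : 1 < σ) :
    Summable fun n : ℕ ↦ Real.log n / (n : ℝ) ^ σ := by
  obtain ⟨ε, hε, hεσ⟩ : ∃ ε : ℝ, 0 < ε ∧ ε - σ < -1 := ⟨(σ - 1) / 2, by linarith, by linarith⟩
  refine ((Real.summable_nat_rpow.mpr hεσ).mul_left ε⁻¹).of_nonneg_of_le
    (fun n ↦ by positivity) fun n ↦ ?_
  rcases n.eq_zero_or_pos with rfl | hn
  · simp only [Nat.cast_zero, Real.log_zero, zero_div]; positivity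
  have hn : (0 : ℝ) < n := by exact_mod_cast hn
  calc Real.log n / (n : ℝ) ^ σ ≤ (n : ℝ) ^ ε / ε / (n : ℝ) ^ σ := by
        gcongr; exact Real.log_le_rpow_div hn.le hε
    _ = ε⁻¹ * (n : ℝ) ^ (ε - σ) := by rw [Real.rpow_sub hn]; ring

theorem Real.summable_log_mul_exp_neg_mul_sq {c : ℝ} (hc : 0 < c) :
    Summable fun n : ℕ ↦ Real.log n * Real.exp (-c * n ^ 2) := by
  refine (Real.summable_pow_mul_exp_neg_nat_mul 1 hc).of_nonneg_of_le (fun n ↦ by positivity)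
    fun n ↦ ?_
  have hn : (n : ℝ) ≤ (n : ℝ) ^ 2 := by exact_mod_cast Nat.le_self_pow two_ne_zero n
  rw [pow_one]
  exact mul_le_mul (Real.log_le_self n.cast_nonneg) (Real.exp_le_exp.mpr (by nlinarith))
    (by positivity) n.cast_nonneg

theorem summable_primePhi {t : ℝ} (ht : 0 < t) :
    Summable fun p : Nat.Primes ↦
      Real.log (p : ℕ) * Real.exp (-((p : ℕ) : ℝ) ^ 2 * Real.pi * t) := by
  have hterm (n : ℕ) : -(Real.pi * t) * (n : ℝ) ^ 2 = -(n : ℝ) ^ 2 * Real.pi * t := by ring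
  have h := Real.summable_log_mul_exp_neg_mul_sq (mul_pos Real.pi_pos ht)
  simp only [hterm] at h
  exact h.comp_injective Subtype.val_injective

theorem primePhi_nonneg (x : ℝ) : 0 ≤ primePhi x :=
  tsum_nonneg fun _ ↦ mul_nonneg (Real.log_natCast_nonneg _) (Real.exp_pos _).le

theorem measurable_primePhi : Measurable primePhi := by
  have h : primePhi = fun x ↦ (∑' p : Nat.Primes, ENNReal.ofReal
      (Real.log (p : ℕ) * Real.exp (-((p : ℕ) : ℝ) ^ 2 * Real.pi * x))).toReal := by
    ext x
    rw [ENNReal.tsum_toReal_eq fun _ ↦ ENNReal.ofReal_ne_top]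
    exact tsum_congr fun p ↦ (ENNReal.toReal_ofReal
      (mul_nonneg (Real.log_natCast_nonneg _) (Real.exp_pos _).le)).symm
  rw [h]
  exact (Measurable.tsum fun _ ↦ by fun_prop).ennreal_toReal

theorem mellin_primePhi {s : ℂ} (hs : 1 < s.re) :
    mellin (fun t ↦ (primePhi t : ℂ)) (s / 2)
      = Gammaℝ s * ∑' p : Nat.Primes, (Real.log (p : ℕ) : ℂ) * ((p : ℕ) : ℂ) ^ (-s) := by
  have hF (t : ℝ) (ht : t ∈ Ioi 0) : HasSum (fun p : Nat.Primes ↦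
      if ((p : ℕ) : ℝ) = 0 then 0
      else (Real.log (p : ℕ) : ℂ) * Real.exp (-Real.pi * ((p : ℕ) : ℝ) ^ 2 * t))
      (primePhi t : ℂ) := by
    refine (hasSum_ofReal.mpr (summable_primePhi ht).hasSum).congr_fun fun p ↦ ?_
    rw [if_neg (Nat.cast_ne_zero.mpr p.prop.ne_zero)]
    push_cast
    ring_nf
  have hsum : Summable fun p : Nat.Primes ↦
      ‖(Real.log (p : ℕ) : ℂ)‖ / |((p : ℕ) : ℝ)| ^ s.re :=
    ((Real.summable_log_div_rpow hs).comp_injective Subtype.val_injective).congr fun p ↦ by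
      rw [norm_real, Real.norm_of_nonneg (Real.log_natCast_nonneg _),
        abs_of_nonneg (Nat.cast_nonneg _)]
      rfl
  rw [← (hasSum_mellin_pi_mul_sq (by linarith) hF hsum).tsum_eq, ← tsum_mul_left]
  refine tsum_congr fun p ↦ ?_
  rw [abs_of_nonneg (Nat.cast_nonneg _), ofReal_natCast, cpow_neg, mul_div_assoc, div_eq_mul_inv]

theorem mellinConvergent_primePhi {s : ℂ} (hs : 1 < s.re) :
    MellinConvergent (fun t ↦ (primePhi t : ℂ)) (s / 2) := by
  have ha : 0 < s.re / 2 := by linarith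
  let f : Nat.Primes → ℝ → ℝ := fun p t ↦
    Real.log (p : ℕ) * (t ^ (s.re / 2 - 1) * Real.exp (-(Real.pi * ((p : ℕ) : ℝ) ^ 2 * t)))
  have hf (p : Nat.Primes) : IntegrableOn (f p) (Ioi 0) :=
    (integrableOn_rpow_mul_exp_neg_pi_mul_sq_mul_Ioi ha (Nat.cast_pos.mpr p.prop.pos)).const_mul _
  have hf0 (p : Nat.Primes) : 0 ≤ᵐ[volume.restrict (Ioi 0)] f p := by
    filter_upwards [ae_restrict_mem measurableSet_Ioi] with t ht
    exact mul_nonneg (Real.log_natCast_nonneg _)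
      (mul_nonneg (Real.rpow_nonneg (le_of_lt ht) _) (Real.exp_pos _).le)
  have hint (p : Nat.Primes) : ∫ t in Ioi 0, f p t
      = Real.Gamma (s.re / 2) * Real.pi ^ (-(s.re / 2))
        * (Real.log (p : ℕ) / ((p : ℕ) : ℝ) ^ s.re) := by
    rw [integral_const_mul,
      integral_rpow_mul_exp_neg_pi_mul_sq_mul_Ioi ha (Nat.cast_pos.mpr p.prop.pos),
      mul_div_cancel₀ _ two_ne_zero]
    ring
  have hG := integrable_tsum_of_nonneg hf hf0 (by
    simp_rw [hint]
    exact ((Real.summable_log_div_rpow hs).comp_injective Subtype.val_injective).mul_left _)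
  refine hG.mono' ?_ ?_
  · refine AEStronglyMeasurable.smul (𝕜 := ℂ)
      (ContinuousOn.aestronglyMeasurable (fun t ht ↦ ?_) measurableSet_Ioi)
      (measurable_ofReal.comp measurable_primePhi).aestronglyMeasurable
    exact (continuousAt_ofReal_cpow_const _ _ (Or.inr (ne_of_gt ht))).continuousWithinAt
  · filter_upwards [ae_restrict_mem measurableSet_Ioi] with t ht
    rw [norm_smul, norm_cpow_eq_rpow_re_of_pos ht, norm_real,
      Real.norm_of_nonneg (primePhi_nonneg t), primePhi, ← tsum_mul_left]
    refine le_of_eq (tsum_congr fun p ↦ ?_)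
    rw [show (s / 2 - 1).re = s.re / 2 - 1 by simp, neg_mul, neg_mul, mul_comm _ Real.pi]
    ring

theorem bigPhi_exp_two_mul (l : ℝ) (z : ℂ) :
    (bigPhi (Real.exp (2 * l)) : ℂ) * cexp (l * (z - 1 / 2))
      = 2 * ((primePhi (Real.exp (2 * l)) : ℂ) * cexp (l * z)) - cexp ((z - 1) * l) := by
  have hsqrt : Real.sqrt (Real.exp (2 * l)) = Real.exp l := by
    rw [show 2 * l = l + l by ring, Real.exp_add, Real.sqrt_mul_self (Real.exp_pos l).le]
  have hrpow : Real.exp (2 * l) ^ ((1 : ℝ) / 4) = Real.exp (l / 2) := by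
    rw [← Real.exp_mul]; ring_nf
  rw [bigPhi, hsqrt, hrpow]
  push_cast
  rw [div_mul_eq_mul_div, div_eq_iff (Complex.exp_ne_zero _)]
  have e1 : cexp l * cexp (l * (z - 1 / 2)) = cexp (l * z) * cexp (l / 2) := by
    rw [← Complex.exp_add, ← Complex.exp_add]; ring_nf
  have e2 : cexp (l * (z - 1 / 2)) = cexp ((z - 1) * l) * cexp (l / 2) := by
    rw [← Complex.exp_add]; ring_nf
  linear_combination (2 * (primePhi (Real.exp (2 * l)) : ℂ)) * e1 - e2

/-- For Re z > 1, the integrals g₁(z) = ∫_{-∞}^0 Φ(e^{2λ})e^{λ(z-1/2)} dλ and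
g₂(z) = 2∫_0^∞ φ(e^{2λ})e^{λz} dλ converge absolutely, and
∑_p (log p)·p^{-z} = (π^{z/2}/Γ(z/2))·(1/(z-1) + g₁(z) + g₂(z)). -/
theorem stmt_7 (z : ℂ) (hz : 1 < z.re) :
    IntegrableOn (fun l : ℝ =>
        (bigPhi (Real.exp (2 * l)) : ℂ) * Complex.exp ((l : ℂ) * (z - 1 / 2)))
      (Iio (0 : ℝ)) MeasureTheory.volume ∧
    IntegrableOn (fun l : ℝ =>
        (primePhi (Real.exp (2 * l)) : ℂ) * Complex.exp ((l : ℂ) * z))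
      (Ioi (0 : ℝ)) MeasureTheory.volume ∧
    ∑' p : Nat.Primes, (Real.log (p : ℕ) : ℂ) * ((p : ℕ) : ℂ) ^ (-z)
      = ((Real.pi : ℂ) ^ (z / 2) / Complex.Gamma (z / 2)) *
          (1 / (z - 1)
            + (∫ l in Iio (0 : ℝ),
                (bigPhi (Real.exp (2 * l)) : ℂ) * Complex.exp ((l : ℂ) * (z - 1 / 2)))
            + 2 * ∫ l in Ioi (0 : ℝ),
                (primePhi (Real.exp (2 * l)) : ℂ) * Complex.exp ((l : ℂ) * z)) := by
  set W : ℝ → ℂ := fun l ↦ (primePhi (Real.exp (2 * l)) : ℂ) * cexp (l * z)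
  have hW : Integrable W := (mellinConvergent_div_two_iff _ z).mp (mellinConvergent_primePhi hz)
  have hz1 : 0 < (z - 1).re := by simpa using hz
  have hexp := integrableOn_exp_mul_complex_Iic hz1 0
  have hΦ : IntegrableOn (fun l : ℝ ↦ (bigPhi (Real.exp (2 * l)) : ℂ) * cexp (l * (z - 1 / 2)))
      (Iic 0) :=
    IntegrableOn.congr_fun ((hW.integrableOn.const_mul 2).sub hexp)
      (fun l _ ↦ (bigPhi_exp_two_mul l z).symm) measurableSet_Iic
  refine ⟨hΦ.mono_set Iio_subset_Iic_self, hW.integrableOn, ?_⟩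
  have hIio : ∫ l in Iio 0, (bigPhi (Real.exp (2 * l)) : ℂ) * cexp (l * (z - 1 / 2))
      = 2 * (∫ l in Iic 0, W l) - 1 / (z - 1) := by
    rw [setIntegral_congr_set Iio_ae_eq_Iic,
      setIntegral_congr_fun measurableSet_Iic fun l _ ↦ bigPhi_exp_two_mul l z,
      integral_sub (hW.integrableOn.const_mul 2) hexp, integral_const_mul,
      integral_exp_mul_complex_Iic hz1]
    simp
  have hΓ : (Real.pi : ℂ) ^ (z / 2) / Complex.Gamma (z / 2) = (Gammaℝ z)⁻¹ := by
    rw [Gammaℝ_def, mul_inv, neg_div, cpow_neg, inv_inv, div_eq_mul_inv]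
  have hmellin := mellin_primePhi hz
  rw [mellin_div_two_eq, ← intervalIntegral.integral_Iic_add_Ioi hW.integrableOn hW.integrableOn]
    at hmellin
  rw [hIio, hΓ, eq_inv_mul_iff_mul_eq₀ (Gammaℝ_ne_zero_of_re_pos (by linarith)), ← hmellin]
  ring
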